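/- arXiv:2308.07252 — 17 statements merged into one kernel-verified Lean document; each statement's English description precedes it below -/
import Mathlib

section
/- Let m be a positive integer and let p and q be Newman polynomials with p(3) = m·q(3). Then, writing d = deg p and e = deg q and r = d − e, we have 2·3^r < 3m and 2m < 3^(r+1); in particular m lies in the open interval (2/3·3^r, 3/2·3^r) for r = deg p − deg q. -/
open Polynomial

/-- A Newman polynomial: all coefficients in {0,1} and constant coefficient 1. -/
def IsNewman (p : Polynomial ℤ) : Prop :=
  (∀ i, p.coeff i = 0 ∨ p.coeff i = 1) ∧ p.coeff 0 = 1

lemma newman_lower {p : Polynomial ℤ} (hp : IsNewman p) :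
    (3 : ℤ) ^ p.natDegree ≤ p.eval 3 := by
  obtain ⟨hc, h0⟩ := hp
  have hne : p ≠ 0 := fun hz => by simp [hz] at h0
  have hlead : p.coeff p.natDegree = 1 := by
    rcases hc p.natDegree with hh | hh
    · exact absurd hh (leadingCoeff_ne_zero.mpr hne)
    · exact hh
  rw [eval_eq_sum_range]
  have h3 : (3 : ℤ) ^ p.natDegree = p.coeff p.natDegree * 3 ^ p.natDegree := by
    rw [hlead]; ring
  rw [h3]
  apply Finset.single_le_sum (f := fun i => p.coeff i * (3:ℤ) ^ i)
  · intro i _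
    rcases hc i with hh | hh <;> simp [hh] <;> positivity
  · simp

lemma newman_upper {p : Polynomial ℤ} (hp : IsNewman p) :
    2 * p.eval 3 < 3 ^ (p.natDegree + 1) := by
  obtain ⟨hc, _⟩ := hp
  have h1 : p.eval 3 ≤ ∑ i ∈ Finset.range (p.natDegree + 1), (3:ℤ) ^ i := by
    rw [eval_eq_sum_range]
    apply Finset.sum_le_sum
    intro i _
    rcases hc i with hh | hh <;> simp [hh] <;> positivity
  have h2 : (∑ i ∈ Finset.range (p.natDegree + 1), (3:ℤ) ^ i) * (3 - 1)
      = 3 ^ (p.natDegree + 1) - 1 := geom_sum_mul 3 _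
  nlinarith [h1, h2]

theorem stmt_0 (m : ℤ) (hm : 0 < m) (p q : Polynomial ℤ)
    (hp : IsNewman p) (hq : IsNewman q)
    (h : p.eval 3 = m * q.eval 3) :
    (2 : ℚ) * 3 ^ ((p.natDegree : ℤ) - (q.natDegree : ℤ)) < 3 * (m : ℚ) ∧
    (2 : ℚ) * (m : ℚ) < 3 ^ (((p.natDegree : ℤ) - (q.natDegree : ℤ)) + 1) := by
  set d := p.natDegree with hd
  set e := q.natDegree with he
  have ha : (3 : ℤ) ^ d ≤ p.eval 3 := newman_lower hp
  have hb : (3 : ℤ) ^ e ≤ q.eval 3 := newman_lower hq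
  have hau : 2 * p.eval 3 < 3 ^ (d + 1) := newman_upper hp
  have hbu : 2 * q.eval 3 < 3 ^ (e + 1) := newman_upper hq
  rw [pow_succ] at hau hbu
  have i1 : 2 * (3:ℤ) ^ d < 3 * m * 3 ^ e := by
    nlinarith [mul_lt_mul_of_pos_left hbu hm]
  have i2 : 2 * m * (3:ℤ) ^ e < 3 ^ d * 3 := by
    nlinarith [mul_le_mul_of_nonneg_left hb hm.le]
  have hq1 : (0 : ℚ) < (3:ℚ) ^ (e : ℕ) := by positivity
  have key : (3 : ℚ) ^ ((d : ℤ) - (e : ℤ)) = (3:ℚ) ^ (d:ℕ) / (3:ℚ) ^ (e:ℕ) := by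
    rw [zpow_sub₀ (by norm_num : (3:ℚ) ≠ 0), zpow_natCast, zpow_natCast]
  constructor
  · rw [key, mul_div_assoc', div_lt_iff₀ hq1]
    exact_mod_cast i1
  · rw [zpow_add_one₀ (by norm_num : (3:ℚ) ≠ 0), key, div_mul_eq_mul_div,
      lt_div_iff₀ hq1]
    exact_mod_cast i2
end

section
/- Let s and t be Newman polynomials, and for a Newman polynomial f let Δ(f) denote the set of positive differences {a − b : a, b ∈ supp(f), a > b} of exponents occurring in f. Then the product s·t is a Newman polynomial if and only if Δ(s) ∩ Δ(t) = ∅. -/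
open Polynomial

/-- The set of positive differences of exponents occurring in `f`. -/
def expDiffs (f : Polynomial ℤ) : Set ℕ :=
  {d | ∃ a ∈ f.support, ∃ b ∈ f.support, b < a ∧ d = a - b}

lemma coeff_mul_card (s t : Polynomial ℤ) (hs : IsNewman s) (ht : IsNewman t) (n : ℕ) :
    (s * t).coeff n =
      (((Finset.HasAntidiagonal.antidiagonal n).filter
        (fun p => p.1 ∈ s.support ∧ p.2 ∈ t.support)).card : ℤ) := by
  rw [Polynomial.coeff_mul, Finset.card_filter]
  push_cast
  apply Finset.sum_congr rfl
  intro p _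
  by_cases h1 : p.1 ∈ s.support
  · by_cases h2 : p.2 ∈ t.support
    · have e1 := (hs.1 p.1).resolve_left (Polynomial.mem_support_iff.mp h1)
      have e2 := (ht.1 p.2).resolve_left (Polynomial.mem_support_iff.mp h2)
      simp [e1, e2, h1, h2]
    · simp [Polynomial.notMem_support_iff.mp h2, h1, h2]
  · simp [Polynomial.notMem_support_iff.mp h1, h1]

theorem stmt_1 (s t : Polynomial ℤ) (hs : IsNewman s) (ht : IsNewman t) :
    IsNewman (s * t) ↔ expDiffs s ∩ expDiffs t = ∅ := by
  constructor
  · intro hst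
    rw [Set.eq_empty_iff_forall_notMem]
    rintro d ⟨⟨a, ha, b, hb, hba, hd1⟩, ⟨c, hc, e, he, hec, hd2⟩⟩
    set n := a + e with hn
    have hbc : b + c = n := by omega
    have key := coeff_mul_card s t hs ht n
    have h1 : ((a, e) : ℕ × ℕ) ∈ (Finset.HasAntidiagonal.antidiagonal n).filter
        (fun p => p.1 ∈ s.support ∧ p.2 ∈ t.support) := by
      exact Finset.mem_filter.mpr ⟨Finset.HasAntidiagonal.mem_antidiagonal.mpr rfl, ha, he⟩
    have h2 : ((b, c) : ℕ × ℕ) ∈ (Finset.HasAntidiagonal.antidiagonal n).filter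
        (fun p => p.1 ∈ s.support ∧ p.2 ∈ t.support) := by
      exact Finset.mem_filter.mpr ⟨Finset.HasAntidiagonal.mem_antidiagonal.mpr hbc, hb, hc⟩
    have hne : ((a, e) : ℕ × ℕ) ≠ (b, c) := by
      intro h
      have : a = b := congrArg Prod.fst h
      omega
    have hcard : 1 < ((Finset.HasAntidiagonal.antidiagonal n).filter
        (fun p => p.1 ∈ s.support ∧ p.2 ∈ t.support)).card :=
      Finset.one_lt_card.mpr ⟨_, h1, _, h2, hne⟩
    have := hst.1 n
    rw [key] at this
    rcases this with h | h
    · have : ((Finset.HasAntidiagonal.antidiagonal n).filter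
        (fun p => p.1 ∈ s.support ∧ p.2 ∈ t.support)).card = 0 := by exact_mod_cast h
      omega
    · have : ((Finset.HasAntidiagonal.antidiagonal n).filter
        (fun p => p.1 ∈ s.support ∧ p.2 ∈ t.support)).card = 1 := by exact_mod_cast h
      omega
  · intro hdisj
    constructor
    · intro n
      rw [coeff_mul_card s t hs ht n]
      have hcard : ((Finset.HasAntidiagonal.antidiagonal n).filter
          (fun p => p.1 ∈ s.support ∧ p.2 ∈ t.support)).card ≤ 1 := by
        rw [Finset.card_le_one]
        rintro ⟨a, e⟩ hae ⟨b, c⟩ hbc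
        simp only [Finset.mem_filter, Finset.HasAntidiagonal.mem_antidiagonal] at hae hbc
        obtain ⟨hsum1, ha, he⟩ := hae
        obtain ⟨hsum2, hb, hc⟩ := hbc
        by_contra hne
        have hab : a ≠ b := by
          intro h; apply hne; subst h
          have : e = c := by omega
          subst this; rfl
        rcases Nat.lt_or_ge b a with hlt | hge
        · -- a > b, then c > e, diff d = a - b = c - e
          have : (a - b) ∈ expDiffs s ∩ expDiffs t := by
            constructor
            · exact ⟨a, ha, b, hb, hlt, rfl⟩
            · exact ⟨c, hc, e, he, by omega, by omega⟩
          rw [hdisj] at this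
          exact this
        · have hlt' : a < b := by omega
          have : (b - a) ∈ expDiffs s ∩ expDiffs t := by
            constructor
            · exact ⟨b, hb, a, ha, hlt', rfl⟩
            · exact ⟨e, he, c, hc, by omega, by omega⟩
          rw [hdisj] at this
          exact this
      interval_cases h : ((Finset.HasAntidiagonal.antidiagonal n).filter
          (fun p => p.1 ∈ s.support ∧ p.2 ∈ t.support)).card
      · left; simp
      · right; simp
    · rw [Polynomial.mul_coeff_zero, hs.2, ht.2, one_mul]
end

section
/- Let N be a natural number and let a, b : ℕ → ℤ be sequences such that a(i) ∈ {0, 1} and b(i) ∈ {−1, 0, 1, 2} for all i < N. If ∑_{i<N} a(i)·3^i = ∑_{i<N} b(i)·3^i, then a(i) = b(i) for all i < N. -/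
lemma aux_zero : ∀ (N : ℕ) (d : ℕ → ℤ), (∀ i < N, |d i| ≤ 2) →
    (∑ i ∈ Finset.range N, d i * 3 ^ i = 0) → ∀ i < N, d i = 0 := by
  intro N
  induction N with
  | zero => intro d _ _ i hi; omega
  | succ n ih =>
    intro d hd hsum i hi
    rw [Finset.sum_range_succ'] at hsum
    have h3 : ∑ i ∈ Finset.range n, d (i + 1) * 3 ^ (i + 1) =
        3 * ∑ i ∈ Finset.range n, d (i + 1) * 3 ^ i := by
      rw [Finset.mul_sum]; apply Finset.sum_congr rfl; intro j _; ring
    rw [h3] at hsum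
    have hd0 : d 0 = 0 := by
      have : (3 : ℤ) ∣ d 0 := ⟨-∑ i ∈ Finset.range n, d (i + 1) * 3 ^ i, by linarith [hsum]⟩
      have habs := hd 0 (Nat.succ_pos n)
      rw [abs_le] at habs
      omega
    have hrest : ∑ i ∈ Finset.range n, d (i + 1) * 3 ^ i = 0 := by
      rw [hd0] at hsum; linarith
    have := ih (fun i => d (i + 1)) (fun i hi => hd (i + 1) (by omega)) hrest
    match i, hi with
    | 0, _ => exact hd0
    | j + 1, hj => exact this j (by omega)

theorem stmt_3 (N : ℕ) (a b : ℕ → ℤ)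
    (ha : ∀ i < N, a i ∈ ({0, 1} : Set ℤ))
    (hb : ∀ i < N, b i ∈ ({-1, 0, 1, 2} : Set ℤ))
    (h : ∑ i ∈ Finset.range N, a i * 3 ^ i = ∑ i ∈ Finset.range N, b i * 3 ^ i) :
    ∀ i < N, a i = b i := by
  have key := aux_zero N (fun i => a i - b i)
    (fun i hi => by
      have h1 := ha i hi; have h2 := hb i hi
      simp only [Set.mem_insert_iff, Set.mem_singleton_iff] at h1 h2
      rcases h1 with h1 | h1 <;> rcases h2 with h2 | h2 | h2 | h2 <;>
        simp [h1, h2] <;> norm_num)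
    (by
      simp only [sub_mul]
      rw [Finset.sum_sub_distrib, h, sub_self])
  intro i hi
  have := key i hi
  linarith
end

section
/- Let r ≥ 1 be an integer and let p and q be Newman polynomials with p(3) = (3^r + 1)·q(3). Then p(X) = (X^r + 1)·q(X) as polynomials in ℤ[X]. -/
open Polynomial

lemma key_zero : ∀ n : ℕ, ∀ f : Polynomial ℤ, f.natDegree ≤ n →
    (∀ i, |f.coeff i| ≤ 2) → f.eval 3 = 0 → f = 0 := by
  intro n
  induction n with
  | zero =>
    intro f hdeg hb hev
    rw [Polynomial.eq_C_of_natDegree_le_zero hdeg] at hev ⊢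
    simp at hev
    simp [hev]
  | succ n ih =>
    intro f hdeg hb hev
    have hf : f.divX * X + C (f.coeff 0) = f := f.divX_mul_X_add
    have hev' : f.divX.eval 3 * 3 + f.coeff 0 = 0 := by
      have := congrArg (Polynomial.eval 3) hf
      simpa using this.trans hev
    have hb0 : |f.coeff 0| ≤ 2 := hb 0
    have hc0 : f.coeff 0 = 0 := by
      have h3 : (3 : ℤ) ∣ f.coeff 0 := ⟨-(f.divX.eval 3), by linarith⟩
      rcases abs_le.mp hb0 with ⟨h1, h2⟩
      omega
    have hevd : f.divX.eval 3 = 0 := by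
      rw [hc0] at hev'; linarith
    have hz : f.divX = 0 := by
      apply ih
      · have := Polynomial.natDegree_divX_eq_natDegree_tsub_one (p := f)
        omega
      · intro i
        simpa [Polynomial.coeff_divX] using hb (i + 1)
      · exact hevd
    rw [← hf, hz, hc0]
    simp

theorem stmt_5 (r : ℕ) (hr : 1 ≤ r) (p q : Polynomial ℤ)
    (hp : IsNewman p) (hq : IsNewman q)
    (h : p.eval 3 = (3 ^ r + 1) * q.eval 3) :
    p = (X ^ r + 1) * q := by
  have hcoeff : ∀ i, ((X ^ r + 1 : Polynomial ℤ) * q).coeff i =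
      (if r ≤ i then q.coeff (i - r) else 0) + q.coeff i := by
    intro i
    rw [add_mul, one_mul, Polynomial.coeff_add, mul_comm, Polynomial.coeff_mul_X_pow']
  have hsub : p - (X ^ r + 1) * q = 0 := by
    apply key_zero (p - (X ^ r + 1) * q).natDegree _ le_rfl
    · intro i
      rw [Polynomial.coeff_sub, hcoeff i]
      rcases hp.1 i with h1 | h1 <;> rcases hq.1 i with h2 | h2 <;>
        rcases hq.1 (i - r) with h3 | h3 <;>
        split_ifs <;> simp [h1, h2, h3] <;> norm_num
    · simp only [Polynomial.eval_sub, Polynomial.eval_mul, Polynomial.eval_add,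
        Polynomial.eval_pow, Polynomial.eval_X, Polynomial.eval_one, h]
      ring
  linear_combination hsub
end

section
/- Let r ≥ 1 and k ≥ 1 be integers and let p and q be Newman polynomials with p(3) = (∑_{i=0}^{r} 3^{ik})·q(3). Then p(X) = (∑_{i=0}^{r} X^{ik})·q(X) as polynomials in ℤ[X]. -/
open Polynomial

/-- A polynomial with coefficients of absolute value ≤ 2 vanishing at 3 is zero. -/
lemma eval3_eq_zero_aux : ∀ n (D : Polynomial ℤ), D.natDegree ≤ n →
    (∀ i, -2 ≤ D.coeff i ∧ D.coeff i ≤ 2) → D.eval 3 = 0 → D = 0 := by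
  intro n
  induction n with
  | zero =>
    intro D hdeg hb h0
    have hD : D = C (D.coeff 0) := Polynomial.eq_C_of_natDegree_le_zero hdeg
    rw [hD] at h0 ⊢
    simpa using h0
  | succ n ih =>
    intro D hdeg hb h0
    have hsplit := Polynomial.X_mul_divX_add D
    have heval : 3 * (D.divX.eval 3) + D.coeff 0 = 0 := by
      have := congrArg (Polynomial.eval 3) hsplit
      simpa using this.trans h0
    have hc0 : D.coeff 0 = 0 := by
      have h1 := (hb 0).1
      have h2 := (hb 0).2
      omega
    have hdivX : D.divX.eval 3 = 0 := by omega
    have hdeg' : D.divX.natDegree ≤ n := by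
      have := Polynomial.natDegree_divX_eq_natDegree_tsub_one (p := D)
      omega
    have hdX : D.divX = 0 := by
      apply ih _ hdeg' _ hdivX
      intro i
      rw [Polynomial.coeff_divX]
      exact hb (i + 1)
    rw [← hsplit, hdX, hc0]
    simp

theorem stmt_6 (r k : ℕ) (hr : 1 ≤ r) (hk : 1 ≤ k) (p q : Polynomial ℤ)
    (hp : IsNewman p) (hq : IsNewman q)
    (h : p.eval 3 = (∑ i ∈ Finset.range (r + 1), 3 ^ (i * k)) * q.eval 3) :
    p = (∑ i ∈ Finset.range (r + 1), X ^ (i * k)) * q := by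
  set R := (r + 1) * k with hR
  set D : Polynomial ℤ := (p * X ^ k + q) - (p + q * X ^ R) with hD
  -- evaluation identity
  have hM : (∑ i ∈ Finset.range (r + 1), (3:ℤ) ^ (i * k)) * (3 ^ k - 1) = 3 ^ R - 1 := by
    have : (∑ i ∈ Finset.range (r + 1), (3:ℤ) ^ (i * k))
        = ∑ i ∈ Finset.range (r + 1), ((3:ℤ) ^ k) ^ i := by
      refine Finset.sum_congr rfl fun i _ => ?_
      rw [← pow_mul, mul_comm]
    rw [this, geom_sum_mul, ← pow_mul, hR, mul_comm (r+1) k]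
  have hDeval : D.eval 3 = 0 := by
    simp only [hD, eval_sub, eval_add, eval_mul, eval_pow, eval_X, h]
    linear_combination (q.eval 3) * hM
  -- coefficient bounds
  have hDcoeff : ∀ i, -2 ≤ D.coeff i ∧ D.coeff i ≤ 2 := by
    intro i
    have h1 : (p * X ^ k).coeff i = 0 ∨ (p * X ^ k).coeff i = 1 := by
      rw [Polynomial.coeff_mul_X_pow']
      split
      · exact hp.1 _
      · exact Or.inl rfl
    have h2 : (q * X ^ R).coeff i = 0 ∨ (q * X ^ R).coeff i = 1 := by
      rw [Polynomial.coeff_mul_X_pow']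
      split
      · exact hq.1 _
      · exact Or.inl rfl
    have h3 := hp.1 i
    have h4 := hq.1 i
    have : D.coeff i = (p * X ^ k).coeff i + q.coeff i - (p.coeff i + (q * X ^ R).coeff i) := by
      simp [hD]
    omega
  have hD0 : D = 0 := eval3_eq_zero_aux D.natDegree D le_rfl hDcoeff hDeval
  have hpoly : p * ((X:Polynomial ℤ) ^ k - 1)
      = ((∑ i ∈ Finset.range (r + 1), (X:Polynomial ℤ) ^ (i * k)) * q) * (X ^ k - 1) := by
    have hgeom : (∑ i ∈ Finset.range (r + 1), (X:Polynomial ℤ) ^ (i * k)) * (X ^ k - 1)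
        = X ^ R - 1 := by
      have : (∑ i ∈ Finset.range (r + 1), (X:Polynomial ℤ) ^ (i * k))
          = ∑ i ∈ Finset.range (r + 1), ((X:Polynomial ℤ) ^ k) ^ i := by
        refine Finset.sum_congr rfl fun i _ => ?_
        rw [← pow_mul, mul_comm]
      rw [this, geom_sum_mul, ← pow_mul, hR, mul_comm (r+1) k]
    have hzero : p * X ^ k + q - (p + q * X ^ R) = 0 := hD0
    have : p * X ^ k + q = p + q * X ^ R := by linear_combination hzero
    linear_combination this - q * hgeom
  have hne : ((X:Polynomial ℤ) ^ k - 1) ≠ 0 := by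
    intro hcontra
    have := congrArg (Polynomial.eval 0) hcontra
    simp [zero_pow (by omega : k ≠ 0)] at this
  exact mul_right_cancel₀ hne hpoly
end

section
/- Let r ≥ 1 and k ≥ 1 be integers and let p and q be Newman polynomials with p(3) = (∑_{i=0}^{2r} (−1)^i·3^{ik})·q(3). Then p(X) = (∑_{i=0}^{2r} (−1)^i·X^{ik})·q(X) as polynomials in ℤ[X]. -/
open Polynomial

private lemma aux_zero_s7 : ∀ n : ℕ, ∀ c : Polynomial ℤ, c.natDegree ≤ n →
    (∀ i, -3 < c.coeff i ∧ c.coeff i < 3) → c.eval 3 = 0 → c = 0 := by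
  intro n
  induction n with
  | zero =>
    intro c hdeg hb he
    have hc : c = C (c.coeff 0) := Polynomial.eq_C_of_natDegree_le_zero hdeg
    rw [hc] at he ⊢
    simpa using he
  | succ n ih =>
    intro c hdeg hb he
    have hM : c.divX * X + C (c.coeff 0) = c := Polynomial.divX_mul_X_add c
    have he' : (c.divX).eval 3 * 3 + c.coeff 0 = 0 := by
      rw [← hM] at he; simpa using he
    have h30 : (3:ℤ) ∣ c.coeff 0 := ⟨-(c.divX.eval 3), by linarith⟩
    have hc0 : c.coeff 0 = 0 := by
      have := hb 0; omega
    have hdiv : c.divX.eval 3 = 0 := by rw [hc0] at he'; linarith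
    have hdeg' : c.divX.natDegree ≤ n := by
      have := Polynomial.natDegree_divX_eq_natDegree_tsub_one (p := c)
      omega
    have hz : c.divX = 0 := ih c.divX hdeg'
      (fun i => by simpa [Polynomial.coeff_divX] using hb (i+1)) hdiv
    rw [← hM, hz, hc0]; simp

private lemma key (k r : ℕ) :
    (∑ i ∈ Finset.range (2 * r + 1), (-1 : Polynomial ℤ) ^ i * X ^ (i * k)) * (X ^ k + 1)
      = X ^ ((2 * r + 1) * k) + 1 := by
  have h := geom_sum_mul (-(X:Polynomial ℤ) ^ k) (2 * r + 1)
  have hrw : ∀ i : ℕ, (-(X:Polynomial ℤ) ^ k) ^ i = (-1 : Polynomial ℤ) ^ i * X ^ (i * k) := by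
    intro i
    rw [neg_pow, ← pow_mul, mul_comm k i]
  simp only [hrw] at h
  have h2 : (-1 : Polynomial ℤ) ^ (2 * r + 1) = -1 := Odd.neg_one_pow ⟨r, by ring⟩
  rw [h2] at h
  linear_combination -h

theorem stmt_7 (r k : ℕ) (hr : 1 ≤ r) (hk : 1 ≤ k) (p q : Polynomial ℤ)
    (hp : IsNewman p) (hq : IsNewman q)
    (h : p.eval 3 = (∑ i ∈ Finset.range (2 * r + 1), (-1 : ℤ) ^ i * 3 ^ (i * k)) * q.eval 3) :
    p = (∑ i ∈ Finset.range (2 * r + 1), (-1 : Polynomial ℤ) ^ i * X ^ (i * k)) * q := by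
  set S : Polynomial ℤ :=
    ∑ i ∈ Finset.range (2 * r + 1), (-1 : Polynomial ℤ) ^ i * X ^ (i * k) with hS
  have hSeval : S.eval 3 = ∑ i ∈ Finset.range (2 * r + 1), (-1 : ℤ) ^ i * 3 ^ (i * k) := by
    rw [hS]
    simp [Polynomial.eval_finset_sum]
  -- A = p * (X^k + 1), B = q * (X^((2r+1)k) + 1)
  set A : Polynomial ℤ := p * (X ^ k + 1) with hA
  set B : Polynomial ℤ := q * (X ^ ((2 * r + 1) * k) + 1) with hB
  have coeffbound : ∀ (f : Polynomial ℤ) (m : ℕ), (∀ i, f.coeff i = 0 ∨ f.coeff i = 1) →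
      ∀ i, 0 ≤ (f * (X ^ m + 1)).coeff i ∧ (f * (X ^ m + 1)).coeff i ≤ 2 := by
    intro f m hf i
    have : (f * (X ^ m + 1)).coeff i = (if m ≤ i then f.coeff (i - m) else 0) + f.coeff i := by
      rw [mul_add, mul_one, Polynomial.coeff_add, Polynomial.coeff_mul_X_pow']
    rw [this]
    rcases hf i with h1 | h1 <;> rcases hf (i - m) with h2 | h2 <;>
      rw [h1, h2] <;> split <;> norm_num
  have hAB : A = B := by
    have hdiff : A - B = 0 := by
      apply aux_zero_s7 ((A - B).natDegree) _ le_rfl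
      · intro i
        have ha := coeffbound p k hp.1 i
        have hb := coeffbound q ((2 * r + 1) * k) hq.1 i
        simp only [hA, hB, Polynomial.coeff_sub]
        omega
      · have hkey := key k r
        have hkey3 := congrArg (Polynomial.eval 3) hkey
        simp only [Polynomial.eval_mul, Polynomial.eval_add, Polynomial.eval_pow,
          Polynomial.eval_X, Polynomial.eval_one] at hkey3
        rw [hSeval] at hkey3
        simp only [Polynomial.eval_sub, hA, hB, Polynomial.eval_mul, Polynomial.eval_add,
          Polynomial.eval_pow, Polynomial.eval_X, Polynomial.eval_one, h]
        rw [← hkey3]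
        ring
    linear_combination hdiff
  have hcancel : p * (X ^ k + 1) = (S * q) * (X ^ k + 1) := by
    rw [← hA, hAB, hB, ← key k r]; ring
  have hXk : ((X : Polynomial ℤ) ^ k + 1) ≠ 0 := by
    intro hc
    have := congrArg (fun f => Polynomial.eval 0 f) hc
    simp [zero_pow (by omega : k ≠ 0)] at this
  have := mul_right_cancel₀ hXk hcancel
  rw [this]
end

section
/- Let r and s be integers with r > s > 0, and let p and q be Newman polynomials with p(3) = (3^r − 3^s + 1)·q(3). Then p(X) = (X^r − X^s + 1)·q(X) as polynomials in ℤ[X]. -/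
open Polynomial

/-- Uniqueness of base-3 digits: two integer polynomials with coefficients in
`[0,2]` that agree at `3` are equal. -/
lemma base3_unique : ∀ n : ℕ, ∀ p q : Polynomial ℤ, p.natDegree ≤ n → q.natDegree ≤ n →
    (∀ i, 0 ≤ p.coeff i ∧ p.coeff i ≤ 2) → (∀ i, 0 ≤ q.coeff i ∧ q.coeff i ≤ 2) →
    p.eval 3 = q.eval 3 → p = q := by
  intro n
  induction n with
  | zero =>
    intro p q hp hq _ _ hev
    rw [eq_C_of_natDegree_le_zero hp, eq_C_of_natDegree_le_zero hq] at hev ⊢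
    simpa using hev
  | succ n ih =>
    intro p q hp hq hpb hqb hev
    have hdp : (X * p.divX + C (p.coeff 0)).eval 3 = p.eval 3 := by rw [X_mul_divX_add]
    have hdq : (X * q.divX + C (q.coeff 0)).eval 3 = q.eval 3 := by rw [X_mul_divX_add]
    simp only [eval_add, eval_mul, eval_X, eval_C] at hdp hdq
    have h0 : p.coeff 0 = q.coeff 0 ∧ p.divX.eval 3 = q.divX.eval 3 := by
      have h1 := hpb 0
      have h2 := hqb 0
      constructor <;> omega
    have hdeg : p.divX.natDegree ≤ n := by
      rw [natDegree_divX_eq_natDegree_tsub_one]; omega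
    have hdeg' : q.divX.natDegree ≤ n := by
      rw [natDegree_divX_eq_natDegree_tsub_one]; omega
    have hdiv : p.divX = q.divX :=
      ih _ _ hdeg hdeg' (fun i => by rw [coeff_divX]; exact hpb _)
        (fun i => by rw [coeff_divX]; exact hqb _) h0.2
    calc p = X * p.divX + C (p.coeff 0) := (X_mul_divX_add p).symm
      _ = X * q.divX + C (q.coeff 0) := by rw [hdiv, h0.1]
      _ = q := X_mul_divX_add q

theorem stmt_8 (r s : ℕ) (hs : 0 < s) (hrs : s < r) (p q : Polynomial ℤ)
    (hp : IsNewman p) (hq : IsNewman q)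
    (h : p.eval 3 = (3 ^ r - 3 ^ s + 1) * q.eval 3) :
    p = (X ^ r - X ^ s + 1) * q := by
  set A : Polynomial ℤ := p + X ^ s * q with hA
  set B : Polynomial ℤ := (X ^ r + 1) * q with hB
  have hAb : ∀ i, 0 ≤ A.coeff i ∧ A.coeff i ≤ 2 := by
    intro i
    have h1 := hp.1 i
    have h2 : (X ^ s * q).coeff i = if s ≤ i then q.coeff (i - s) else 0 := by
      rw [mul_comm, coeff_mul_X_pow']
    have h3 := hq.1 (i - s)
    simp only [hA, coeff_add, h2]
    split <;> omega
  have hBb : ∀ i, 0 ≤ B.coeff i ∧ B.coeff i ≤ 2 := by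
    intro i
    have h2 : (X ^ r * q).coeff i = if r ≤ i then q.coeff (i - r) else 0 := by
      rw [mul_comm, coeff_mul_X_pow']
    have h3 := hq.1 (i - r)
    have h4 := hq.1 i
    simp only [hB, add_mul, one_mul, coeff_add, h2]
    split <;> omega
  have hev : A.eval 3 = B.eval 3 := by
    simp only [hA, hB, eval_add, eval_mul, eval_pow, eval_X, eval_one, add_mul, one_mul, h]
    ring
  have hAB : A = B :=
    base3_unique (max A.natDegree B.natDegree) A B (le_max_left _ _) (le_max_right _ _)
      hAb hBb hev
  have : p + X ^ s * q = (X ^ r + 1) * q := hAB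
  linear_combination this
end

section
/- Let n ≥ 3 and k ≥ 0 be integers. Define q_k(X) = ∑_{i=0}^{n+k−1} X^i and p_k(X) = 1 + ∑_{i=n}^{n+k−1} X^i + ∑_{i=n+k+1}^{2n+k−1} X^i. Then p_k and q_k are Newman polynomials, p_k(X) = (X^n − X + 1)·q_k(X) in ℤ[X], and consequently p_k(3) = (3^n − 2)·q_k(3). In particular, 3^n − 2 has infinitely many universal representations as a quotient of sums of distinct powers of 3. -/
open Polynomial

lemma coeffSumXpow (s : Finset ℕ) (j : ℕ) :
    (∑ i ∈ s, (X : Polynomial ℤ) ^ i).coeff j = if j ∈ s then 1 else 0 := by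
  simp [Polynomial.finset_sum_coeff, Polynomial.coeff_X_pow]

lemma keyId (n k : ℕ) (hn : 3 ≤ n) :
    (1 + (∑ i ∈ Finset.Ico n (n + k), (X : Polynomial ℤ) ^ i) +
        ∑ i ∈ Finset.Ico (n + k + 1) (2 * n + k), X ^ i)
      = (X ^ n - X + 1) * ∑ i ∈ Finset.range (n + k), X ^ i := by
  have h1 : ((X : Polynomial ℤ) - 1) * ∑ i ∈ Finset.range (n + k), X ^ i
      = X ^ (n + k) - 1 := by
    rw [mul_comm]; exact geom_sum_mul X (n + k)
  have h2 : (X : Polynomial ℤ) ^ n * ∑ i ∈ Finset.range (n + k), X ^ i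
      = ∑ i ∈ Finset.Ico n (2 * n + k), X ^ i := by
    rw [Finset.mul_sum, Finset.sum_Ico_eq_sum_range, show 2 * n + k - n = n + k by omega]
    simp [pow_add]
  have hle1 : n ≤ n + k := by omega
  have hle2 : n + k ≤ 2 * n + k := by omega
  have hlt : n + k < 2 * n + k := by omega
  rw [show (X : Polynomial ℤ) ^ n - X + 1 = X ^ n - (X - 1) by ring, sub_mul, h1, h2,
    ← Finset.sum_Ico_consecutive _ hle1 hle2, Finset.sum_eq_sum_Ico_succ_bot hlt]
  ring

lemma newmanQ (m : ℕ) (hm : 0 < m) :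
    IsNewman (∑ i ∈ Finset.range m, X ^ i) := by
  constructor
  · intro i
    rw [coeffSumXpow]
    split <;> simp
  · rw [coeffSumXpow]
    simp [hm]

lemma newmanP (n k : ℕ) (hn : 3 ≤ n) :
    IsNewman (1 + (∑ i ∈ Finset.Ico n (n + k), (X : Polynomial ℤ) ^ i) +
        ∑ i ∈ Finset.Ico (n + k + 1) (2 * n + k), X ^ i) := by
  constructor
  · intro i
    simp only [coeff_add, coeff_one, coeffSumXpow]
    by_cases h0 : i = 0 <;> by_cases h1 : i ∈ Finset.Ico n (n + k) <;>
      by_cases h2 : i ∈ Finset.Ico (n + k + 1) (2 * n + k) <;>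
      simp_all [Finset.mem_Ico] <;> try omega
  · simp only [coeff_add, coeff_one, coeffSumXpow]
    have h1 : 0 ∉ Finset.Ico n (n + k) := by intro h; rw [Finset.mem_Ico] at h; omega
    have h2 : 0 ∉ Finset.Ico (n + k + 1) (2 * n + k) := by intro h; rw [Finset.mem_Ico] at h; omega
    simp [h1, h2]

theorem stmt_9 (n k : ℕ) (hn : 3 ≤ n) (pk qk : Polynomial ℤ)
    (hqk : qk = ∑ i ∈ Finset.range (n + k), X ^ i)
    (hpk : pk = 1 + (∑ i ∈ Finset.Ico n (n + k), X ^ i) +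
        ∑ i ∈ Finset.Ico (n + k + 1) (2 * n + k), X ^ i) :
    IsNewman pk ∧ IsNewman qk ∧
    pk = (X ^ n - X + 1) * qk ∧
    pk.eval 3 = (3 ^ n - 2) * qk.eval 3 ∧
    {pq : Polynomial ℤ × Polynomial ℤ | IsNewman pq.1 ∧ IsNewman pq.2 ∧
      pq.2 ∣ pq.1 ∧ pq.1.eval 3 = (3 ^ n - 2) * pq.2.eval 3}.Infinite := by
  subst hqk hpk
  have hkey := keyId n k hn
  have heval : ∀ k' : ℕ,
      ((1 + (∑ i ∈ Finset.Ico n (n + k'), (X : Polynomial ℤ) ^ i) +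
        ∑ i ∈ Finset.Ico (n + k' + 1) (2 * n + k'), X ^ i)).eval 3
      = (3 ^ n - 2) * (∑ i ∈ Finset.range (n + k'), (X : Polynomial ℤ) ^ i).eval 3 := by
    intro k'
    rw [keyId n k' hn, eval_mul]
    congr 1
    simp
    ring
  refine ⟨newmanP n k hn, newmanQ (n + k) (by omega), hkey, heval k, ?_⟩
  apply Set.infinite_of_injective_forall_mem
    (f := fun k' : ℕ => ((1 + (∑ i ∈ Finset.Ico n (n + k'), (X : Polynomial ℤ) ^ i) +
        ∑ i ∈ Finset.Ico (n + k' + 1) (2 * n + k'), X ^ i),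
        ∑ i ∈ Finset.range (n + k'), (X : Polynomial ℤ) ^ i))
  · intro a b hab
    have hq : (∑ i ∈ Finset.range (n + a), (X : Polynomial ℤ) ^ i)
        = ∑ i ∈ Finset.range (n + b), (X : Polynomial ℤ) ^ i := congrArg Prod.snd hab
    have he := congrArg (Polynomial.eval (3 : ℤ)) hq
    simp only [Polynomial.eval_finset_sum, eval_pow, eval_X] at he
    have gmono : StrictMono (fun m => ∑ i ∈ Finset.range m, (3 : ℤ) ^ i) := by
      apply strictMono_nat_of_lt_succ
      intro m
      rw [Finset.sum_range_succ]
      have : (0:ℤ) < 3 ^ m := by positivity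
      linarith
    have := gmono.injective he
    omega
  · intro k'
    exact ⟨newmanP n k' hn, newmanQ (n + k') (by omega),
      by simp only [Set.mem_setOf_eq]; rw [keyId n k' hn]; exact dvd_mul_left _ _, heval k'⟩
end

section
/- For every integer j ≥ 0, define q_j(X) = ∑_{i=0}^{j+1} X^{2i} and p_j(X) = 1 + X^3 + ∑_{k=4}^{2j+3} X^k + X^{2j+5} + X^{2j+6}. Then p_j and q_j are Newman polynomials, p_j(X) = (X^4 + X^3 − X^2 + 1)·q_j(X) in ℤ[X], and p_j(3) = 100·q_j(3). -/
open Polynomial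

lemma stmt_10_key (j : ℕ) : (1 + X ^ 3 + (∑ k ∈ Finset.Ico 4 (2 * j + 4), X ^ k) +
    X ^ (2 * j + 5) + X ^ (2 * j + 6) : ℤ[X]) =
    (X ^ 4 + X ^ 3 - X ^ 2 + 1) * ∑ i ∈ Finset.range (j + 2), X ^ (2 * i) := by
  induction j with
  | zero => simp [Finset.sum_range_succ]; ring
  | succ n ih =>
    have h1 : 2 * (n + 1) + 4 = (2 * n + 5) + 1 := by ring
    have h2 : 2 * n + 5 = (2 * n + 4) + 1 := by ring
    rw [h1, Finset.sum_Ico_succ_top (by omega), h2, Finset.sum_Ico_succ_top (by omega),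
      show n + 1 + 2 = (n + 2) + 1 by ring, Finset.sum_range_succ]
    rw [← h2]
    linear_combination ih

theorem stmt_10 (j : ℕ) (pj qj : Polynomial ℤ)
    (hqj : qj = ∑ i ∈ Finset.range (j + 2), X ^ (2 * i))
    (hpj : pj = 1 + X ^ 3 + (∑ k ∈ Finset.Ico 4 (2 * j + 4), X ^ k) +
        X ^ (2 * j + 5) + X ^ (2 * j + 6)) :
    IsNewman pj ∧ IsNewman qj ∧
    pj = (X ^ 4 + X ^ 3 - X ^ 2 + 1) * qj ∧
    pj.eval 3 = 100 * qj.eval 3 := by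
  have hid : pj = (X ^ 4 + X ^ 3 - X ^ 2 + 1) * qj := by
    rw [hpj, hqj]; exact stmt_10_key j
  refine ⟨⟨?_, ?_⟩, ⟨?_, ?_⟩, hid, ?_⟩
  · intro n
    subst hpj
    simp only [Polynomial.coeff_add, Polynomial.finset_sum_coeff, Polynomial.coeff_X_pow,
      Polynomial.coeff_one, Finset.sum_ite_eq, Finset.mem_Ico]
    split_ifs <;> omega
  · subst hpj
    simp only [Polynomial.coeff_add, Polynomial.finset_sum_coeff, Polynomial.coeff_X_pow,
      Polynomial.coeff_one, Finset.sum_ite_eq, Finset.mem_Ico]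
    norm_num
  · intro n
    subst hqj
    have h0 : ((∑ i ∈ Finset.range (j + 2), X ^ (2 * i) : ℤ[X])).coeff n =
        (((Finset.range (j + 2)).filter (fun i => n = 2 * i)).card : ℤ) := by
      simp [Polynomial.finset_sum_coeff, Polynomial.coeff_X_pow, Finset.sum_boole]
    rw [h0]
    have h : ((Finset.range (j + 2)).filter (fun i => n = 2 * i)).card ≤ 1 :=
      Finset.card_le_one.mpr (by intro a ha b hb; simp at ha hb; omega)
    interval_cases h' : ((Finset.range (j + 2)).filter (fun i => n = 2 * i)).card <;> simp
  · subst hqj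
    simp [Polynomial.finset_sum_coeff, Polynomial.coeff_X_pow, Finset.sum_ite_eq, eq_comm]
  · rw [hid]
    simp only [Polynomial.eval_mul, Polynomial.eval_add, Polynomial.eval_sub,
      Polynomial.eval_pow, Polynomial.eval_X, Polynomial.eval_one]
    norm_num
end

section
/- Let p and q be Newman polynomials with p(3) = 100·q(3). Then p(X) = (X^4 + X^3 − X^2 + 1)·q(X) as polynomials in ℤ[X]. In particular, every representation of 100 as a quotient of sums of distinct powers of 3 is universal, with polynomial quotient X^4 + X^3 − X^2 + 1. -/
open Polynomial

set_option synthInstance.maxSize 20000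

/-- Forward-reachable states of the carry automaton. -/
def InR (t w1 w2 w3 w4 : ℤ) : Prop :=
  (t = 0 ∧ w1 = 0 ∧ w2 = 0 ∧ w3 = 0 ∧ w4 = 0) ∨
  (t = 0 ∧ w1 = 0 ∧ w2 = 0 ∧ w3 = 0 ∧ w4 = 1) ∨
  (t = 0 ∧ w1 = 0 ∧ w2 = 0 ∧ w3 = 1 ∧ w4 = 0) ∨
  (t = 0 ∧ w1 = 0 ∧ w2 = 0 ∧ w3 = 1 ∧ w4 = 1) ∨
  (t = 0 ∧ w1 = 0 ∧ w2 = 1 ∧ w3 = 0 ∧ w4 = 0) ∨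
  (t = 0 ∧ w1 = 0 ∧ w2 = 1 ∧ w3 = 0 ∧ w4 = 1) ∨
  (t = 0 ∧ w1 = 0 ∧ w2 = 1 ∧ w3 = 1 ∧ w4 = 0) ∨
  (t = 0 ∧ w1 = 0 ∧ w2 = 1 ∧ w3 = 1 ∧ w4 = 1) ∨
  (t = 0 ∧ w1 = 1 ∧ w2 = 0 ∧ w3 = 0 ∧ w4 = 0) ∨
  (t = 0 ∧ w1 = 1 ∧ w2 = 0 ∧ w3 = 1 ∧ w4 = 0) ∨
  (t = 0 ∧ w1 = 1 ∧ w2 = 0 ∧ w3 = 1 ∧ w4 = 1) ∨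
  (t = 0 ∧ w1 = 1 ∧ w2 = 1 ∧ w3 = 0 ∧ w4 = 0) ∨
  (t = 0 ∧ w1 = 1 ∧ w2 = 1 ∧ w3 = 1 ∧ w4 = 0) ∨
  (t = 0 ∧ w1 = 1 ∧ w2 = 1 ∧ w3 = 1 ∧ w4 = 1) ∨
  (t = 1 ∧ w1 = 1 ∧ w2 = 0 ∧ w3 = 0 ∧ w4 = 1) ∨
  (t = 1 ∧ w1 = 1 ∧ w2 = 1 ∧ w3 = 0 ∧ w4 = 0) ∨
  (t = 1 ∧ w1 = 1 ∧ w2 = 1 ∧ w3 = 0 ∧ w4 = 1)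

/-- Coreachable states of the carry automaton (with carry in {0,1}). -/
def InJ (t w1 w2 w3 w4 : ℤ) : Prop :=
  (t = 0 ∧ w1 = 0 ∧ w2 = 0 ∧ w3 = 0 ∧ w4 = 0) ∨
  (t = 0 ∧ w1 = 0 ∧ w2 = 0 ∧ w3 = 0 ∧ w4 = 1) ∨
  (t = 0 ∧ w1 = 0 ∧ w2 = 0 ∧ w3 = 1 ∧ w4 = 0) ∨
  (t = 0 ∧ w1 = 0 ∧ w2 = 1 ∧ w3 = 0 ∧ w4 = 0) ∨
  (t = 0 ∧ w1 = 0 ∧ w2 = 1 ∧ w3 = 0 ∧ w4 = 1) ∨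
  (t = 0 ∧ w1 = 1 ∧ w2 = 0 ∧ w3 = 0 ∧ w4 = 0) ∨
  (t = 0 ∧ w1 = 1 ∧ w2 = 0 ∧ w3 = 0 ∧ w4 = 1) ∨
  (t = 0 ∧ w1 = 1 ∧ w2 = 0 ∧ w3 = 1 ∧ w4 = 0) ∨
  (t = 1 ∧ w1 = 0 ∧ w2 = 0 ∧ w3 = 0 ∧ w4 = 0) ∨
  (t = 1 ∧ w1 = 0 ∧ w2 = 0 ∧ w3 = 0 ∧ w4 = 1) ∨
  (t = 1 ∧ w1 = 0 ∧ w2 = 0 ∧ w3 = 1 ∧ w4 = 1) ∨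
  (t = 1 ∧ w1 = 0 ∧ w2 = 1 ∧ w3 = 0 ∧ w4 = 0) ∨
  (t = 1 ∧ w1 = 0 ∧ w2 = 1 ∧ w3 = 0 ∧ w4 = 1) ∨
  (t = 1 ∧ w1 = 0 ∧ w2 = 1 ∧ w3 = 1 ∧ w4 = 1) ∨
  (t = 1 ∧ w1 = 1 ∧ w2 = 0 ∧ w3 = 0 ∧ w4 = 0) ∨
  (t = 1 ∧ w1 = 1 ∧ w2 = 0 ∧ w3 = 1 ∧ w4 = 1)

lemma aut_fwd (t t' w1 w2 w3 w4 a b : ℤ)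
    (ha : a = 0 ∨ a = 1) (hb : b = 0 ∨ b = 1)
    (hR : InR t w1 w2 w3 w4)
    (ht : 3 * t' = t + (a + w3 + w4 - w2) - b) :
    InR t' a w1 w2 w3 := by
  unfold InR at hR ⊢
  have h1 : t = 0 ∨ t = 1 := by omega
  have h2 : w1 = 0 ∨ w1 = 1 := by omega
  have h3 : w2 = 0 ∨ w2 = 1 := by omega
  have h4 : w3 = 0 ∨ w3 = 1 := by omega
  have h5 : w4 = 0 ∨ w4 = 1 := by omega
  have h6 : t' = 0 ∨ t' = 1 := by omega
  rcases h1 with rfl|rfl <;> rcases h2 with rfl|rfl <;> rcases h3 with rfl|rfl <;>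
    rcases h4 with rfl|rfl <;> rcases h5 with rfl|rfl <;> rcases ha with rfl|rfl <;>
    rcases hb with rfl|rfl <;> rcases h6 with rfl|rfl <;> revert hR ht <;> decide

lemma aut_bwd (t t' w1 w2 w3 w4 a b : ℤ)
    (ha : a = 0 ∨ a = 1) (hb : b = 0 ∨ b = 1)
    (hR : InR t w1 w2 w3 w4)
    (hJ : InJ t' a w1 w2 w3)
    (ht : 3 * t' = t + (a + w3 + w4 - w2) - b) :
    InJ t w1 w2 w3 w4 := by
  unfold InR at hR; unfold InJ at hJ ⊢
  have h1 : t = 0 ∨ t = 1 := by omega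
  have h2 : w1 = 0 ∨ w1 = 1 := by omega
  have h3 : w2 = 0 ∨ w2 = 1 := by omega
  have h4 : w3 = 0 ∨ w3 = 1 := by omega
  have h5 : w4 = 0 ∨ w4 = 1 := by omega
  have h6 : t' = 0 ∨ t' = 1 := by omega
  rcases h1 with rfl|rfl <;> rcases h2 with rfl|rfl <;> rcases h3 with rfl|rfl <;>
    rcases h4 with rfl|rfl <;> rcases h5 with rfl|rfl <;> rcases ha with rfl|rfl <;>
    rcases hb with rfl|rfl <;> rcases h6 with rfl|rfl <;>
    first
      | decide
      | (revert ht; decide)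
      | (revert hR; decide)
      | (revert hJ; decide)

lemma aut_zero (t t' w1 w2 w3 w4 a b : ℤ)
    (ha : a = 0 ∨ a = 1) (hb : b = 0 ∨ b = 1)
    (hR : InR t w1 w2 w3 w4)
    (hJ : InJ t w1 w2 w3 w4)
    (hJ' : InJ t' a w1 w2 w3)
    (ht : 3 * t' = t + (a + w3 + w4 - w2) - b) :
    a + w3 + w4 - w2 = b := by
  unfold InR at hR; unfold InJ at hJ hJ'
  have h1 : t = 0 ∨ t = 1 := by omega
  have h2 : w1 = 0 ∨ w1 = 1 := by omega
  have h3 : w2 = 0 ∨ w2 = 1 := by omega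
  have h4 : w3 = 0 ∨ w3 = 1 := by omega
  have h5 : w4 = 0 ∨ w4 = 1 := by omega
  have h6 : t' = 0 ∨ t' = 1 := by omega
  rcases h1 with rfl|rfl <;> rcases h2 with rfl|rfl <;> rcases h3 with rfl|rfl <;>
    rcases h4 with rfl|rfl <;> rcases h5 with rfl|rfl <;> rcases ha with rfl|rfl <;>
    rcases hb with rfl|rfl <;> rcases h6 with rfl|rfl <;>
    first
      | decide
      | (revert ht; decide)
      | (revert hR; decide)
      | (revert hJ; decide)
      | (revert hJ'; decide)

/-- Shifted coefficient window. -/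
def Wc (q : Polynomial ℤ) (k i : ℕ) : ℤ := if k ≤ i then q.coeff (i - k) else 0

/-- Digit difference. -/
def Dd (p q : Polynomial ℤ) (i : ℕ) : ℤ :=
  (q.coeff i + Wc q 3 i + Wc q 4 i - Wc q 2 i) - p.coeff i

/-- Partial sums. -/
def Ss (p q : Polynomial ℤ) (m : ℕ) : ℤ := ∑ i ∈ Finset.range m, Dd p q i * 3 ^ i

/-- Carries. -/
def Tt (p q : Polynomial ℤ) (i : ℕ) : ℤ := Ss p q i / 3 ^ i

lemma Wc_succ (q : Polynomial ℤ) (k i : ℕ) : Wc q (k + 1) (i + 1) = Wc q k i := by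
  simp [Wc, Nat.succ_le_succ_iff, Nat.succ_sub_succ]

lemma Wc_zero (q : Polynomial ℤ) (i : ℕ) : Wc q 0 i = q.coeff i := by
  simp [Wc]

lemma coeff_hundred_mul (q : Polynomial ℤ) (i : ℕ) :
    ((X ^ 4 + X ^ 3 - X ^ 2 + 1) * q).coeff i =
      q.coeff i + Wc q 3 i + Wc q 4 i - Wc q 2 i := by
  have h : (X ^ 4 + X ^ 3 - X ^ 2 + 1) * q = q * X ^ 4 + q * X ^ 3 - q * X ^ 2 + q := by
    ring
  rw [h]
  simp only [coeff_add, coeff_sub, coeff_mul_X_pow', Wc]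
  ring

theorem stmt_11 (p q : Polynomial ℤ) (hp : IsNewman p) (hq : IsNewman q)
    (h : p.eval 3 = 100 * q.eval 3) :
    p = (X ^ 4 + X ^ 3 - X ^ 2 + 1) * q := by
  obtain ⟨hb, -⟩ := hp
  obtain ⟨ha, -⟩ := hq
  have haW : ∀ k i, Wc q k i = 0 ∨ Wc q k i = 1 := by
    intro k i
    unfold Wc
    split
    · exact ha _
    · exact Or.inl rfl
  set r : Polynomial ℤ := (X ^ 4 + X ^ 3 - X ^ 2 + 1) * q with hr
  -- degree bound
  set N : ℕ := p.natDegree + q.natDegree + 5 with hN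
  have hdegp : p.natDegree < N := by omega
  have hdegr : r.natDegree < N := by
    have h1 : r.natDegree ≤ (X ^ 4 + X ^ 3 - X ^ 2 + 1 : Polynomial ℤ).natDegree
        + q.natDegree := natDegree_mul_le
    have h2 : (X ^ 4 + X ^ 3 - X ^ 2 + 1 : Polynomial ℤ).natDegree ≤ 4 := by
      compute_degree
    omega
  -- vanishing of digits beyond N
  have haz : ∀ i, N ≤ i → q.coeff i = 0 := fun i hi =>
    coeff_eq_zero_of_natDegree_lt (by omega)
  have hWz : ∀ k i, 1 ≤ k → k ≤ 4 → N ≤ i - 4 → Wc q k i = 0 := by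
    intro k i h1 h4 hi
    unfold Wc
    split
    · exact coeff_eq_zero_of_natDegree_lt (by omega)
    · rfl
  have hDz : ∀ i, N + 4 ≤ i → Dd p q i = 0 := by
    intro i hi
    unfold Dd
    rw [haz i (by omega), hWz 3 i (by omega) (by omega) (by omega),
      hWz 4 i (by omega) (by omega) (by omega), hWz 2 i (by omega) (by omega) (by omega),
      coeff_eq_zero_of_natDegree_lt (by omega)]
    ring
  -- total sum is zero
  have heval : r.eval 3 = p.eval 3 := by
    rw [hr, h]
    simp only [eval_mul, eval_add, eval_sub, eval_pow, eval_X, eval_one]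
    norm_num
  have hSNz : ∀ m, N + 4 ≤ m → Ss p q m = 0 := by
    intro m hm
    have e1 : p.eval 3 = ∑ i ∈ Finset.range m, p.coeff i * 3 ^ i :=
      eval_eq_sum_range' (by omega) 3
    have e2 : r.eval 3 = ∑ i ∈ Finset.range m, r.coeff i * 3 ^ i :=
      eval_eq_sum_range' (by omega) 3
    have e3 : Ss p q m = r.eval 3 - p.eval 3 := by
      rw [e1, e2, ← Finset.sum_sub_distrib]
      unfold Ss Dd
      apply Finset.sum_congr rfl
      intro i _
      rw [coeff_hundred_mul]
      ring
    rw [e3, heval]; ring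
  -- divisibility of partial sums
  have hdvd : ∀ i, (3 : ℤ) ^ i ∣ Ss p q i := by
    intro i
    have hile : i ≤ N + 4 + i := by omega
    have hsplit : Ss p q i + ∑ j ∈ Finset.Ico i (N + 4 + i), Dd p q j * 3 ^ j
        = Ss p q (N + 4 + i) := by
      unfold Ss
      rw [Finset.range_eq_Ico, Finset.range_eq_Ico]
      exact Finset.sum_Ico_consecutive (fun j => Dd p q j * 3 ^ j) (Nat.zero_le i) hile
    have hdvdsum : (3 : ℤ) ^ i ∣ ∑ j ∈ Finset.Ico i (N + 4 + i), Dd p q j * 3 ^ j := by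
      apply Finset.dvd_sum
      intro j hj
      rw [Finset.mem_Ico] at hj
      exact Dvd.dvd.mul_left (pow_dvd_pow 3 hj.1) _
    rw [hSNz (N + 4 + i) (by omega)] at hsplit
    obtain ⟨c, hc⟩ := hdvdsum
    rw [hc] at hsplit
    exact ⟨-c, by linarith⟩
  have hT : ∀ i, (3 : ℤ) ^ i * Tt p q i = Ss p q i := by
    intro i
    exact Int.mul_ediv_cancel' (hdvd i)
  -- carry recurrence
  have hrec : ∀ i, 3 * Tt p q (i + 1) = Tt p q i + Dd p q i := by
    intro i
    have h1 : Ss p q (i + 1) = Ss p q i + Dd p q i * 3 ^ i := by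
      unfold Ss
      rw [Finset.sum_range_succ]
    have h2 := hT (i + 1)
    have h3 := hT i
    rw [h1, ← h3] at h2
    have hpow : (3 : ℤ) ^ (i + 1) = 3 ^ i * 3 := pow_succ 3 i
    rw [hpow] at h2
    have hne : (3 : ℤ) ^ i ≠ 0 := pow_ne_zero i (by norm_num)
    apply mul_left_cancel₀ hne
    ring_nf
    ring_nf at h2
    linarith
  -- carries vanish at the end
  have hTz : ∀ i, N + 4 ≤ i → Tt p q i = 0 := by
    intro i hi
    have := hT i
    rw [hSNz i hi] at this
    have hne : (3 : ℤ) ^ i ≠ 0 := pow_ne_zero i (by norm_num)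
    exact by
      rcases mul_eq_zero.mp this with h' | h'
      · exact absurd h' hne
      · exact h'
  -- the state sequence
  have hrec' : ∀ i, 3 * Tt p q (i + 1) =
      Tt p q i + (q.coeff i + Wc q 3 i + Wc q 4 i - Wc q 2 i) - p.coeff i := by
    intro i
    rw [hrec i]
    unfold Dd
    ring
  -- forward invariant
  have hfwd : ∀ i, InR (Tt p q i) (Wc q 1 i) (Wc q 2 i) (Wc q 3 i) (Wc q 4 i) := by
    intro i
    induction i with
    | zero =>
      have hT0 : Tt p q 0 = 0 := by unfold Tt Ss; simp
      have hW0 : ∀ k, 1 ≤ k → Wc q k 0 = 0 := by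
        intro k hk; unfold Wc; rw [if_neg (by omega)]
      rw [hT0, hW0 1 (by omega), hW0 2 (by omega), hW0 3 (by omega), hW0 4 (by omega)]
      unfold InR; tauto
    | succ i ih =>
      have := aut_fwd (Tt p q i) (Tt p q (i + 1)) (Wc q 1 i) (Wc q 2 i) (Wc q 3 i)
        (Wc q 4 i) (q.coeff i) (p.coeff i) (ha i) (hb i) ih (hrec' i)
      rw [show (1 : ℕ) = 0 + 1 by rfl, Wc_succ, Wc_zero,
        show (0 : ℕ) + 1 = 1 by rfl, show (2 : ℕ) = 1 + 1 by rfl, Wc_succ,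
        show (3 : ℕ) = 2 + 1 by rfl, Wc_succ, show (4 : ℕ) = 3 + 1 by rfl, Wc_succ]
      exact this
  -- backward invariant
  have hstep : ∀ i, InJ (Tt p q (i + 1)) (Wc q 1 (i + 1)) (Wc q 2 (i + 1))
      (Wc q 3 (i + 1)) (Wc q 4 (i + 1)) →
      InJ (Tt p q i) (Wc q 1 i) (Wc q 2 i) (Wc q 3 i) (Wc q 4 i) := by
    intro i hJ
    rw [show (1 : ℕ) = 0 + 1 by rfl, Wc_succ, Wc_zero,
      show (0 : ℕ) + 1 = 1 by rfl, show (2 : ℕ) = 1 + 1 by rfl, Wc_succ,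
      show (3 : ℕ) = 2 + 1 by rfl, Wc_succ, show (4 : ℕ) = 3 + 1 by rfl, Wc_succ] at hJ
    exact aut_bwd (Tt p q i) (Tt p q (i + 1)) (Wc q 1 i) (Wc q 2 i) (Wc q 3 i)
      (Wc q 4 i) (q.coeff i) (p.coeff i) (ha i) (hb i) (hfwd i) hJ (hrec' i)
  have htop : ∀ i, N + 8 ≤ i → InJ (Tt p q i) (Wc q 1 i) (Wc q 2 i) (Wc q 3 i)
      (Wc q 4 i) := by
    intro i hi
    have hWz' : ∀ k, 1 ≤ k → k ≤ 4 → Wc q k i = 0 := by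
      intro k h1 h4
      exact hWz k i h1 h4 (by omega)
    rw [hTz i (by omega), hWz' 1 (by omega) (by omega), hWz' 2 (by omega) (by omega),
      hWz' 3 (by omega) (by omega), hWz' 4 (by omega) (by omega)]
    unfold InJ; tauto
  have hbwd : ∀ i, InJ (Tt p q i) (Wc q 1 i) (Wc q 2 i) (Wc q 3 i) (Wc q 4 i) := by
    have key : ∀ d i, i + d = N + 8 →
        InJ (Tt p q i) (Wc q 1 i) (Wc q 2 i) (Wc q 3 i) (Wc q 4 i) := by
      intro d
      induction d with
      | zero => intro i hi; exact htop i (by omega)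
      | succ d ih =>
        intro i hi
        exact hstep i (ih (i + 1) (by omega))
    intro i
    by_cases hc : N + 8 ≤ i
    · exact htop i hc
    · exact key (N + 8 - i) i (by omega)
  -- digits agree
  have hD : ∀ i, Dd p q i = 0 := by
    intro i
    have hJ1 := hbwd (i + 1)
    rw [show (1 : ℕ) = 0 + 1 by rfl, Wc_succ, Wc_zero,
      show (0 : ℕ) + 1 = 1 by rfl, show (2 : ℕ) = 1 + 1 by rfl, Wc_succ,
      show (3 : ℕ) = 2 + 1 by rfl, Wc_succ, show (4 : ℕ) = 3 + 1 by rfl, Wc_succ] at hJ1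
    have := aut_zero (Tt p q i) (Tt p q (i + 1)) (Wc q 1 i) (Wc q 2 i) (Wc q 3 i)
      (Wc q 4 i) (q.coeff i) (p.coeff i) (ha i) (hb i) (hfwd i) (hbwd i) hJ1 (hrec' i)
    unfold Dd
    omega
  ext i
  have := hD i
  unfold Dd at this
  rw [coeff_hundred_mul]
  omega
end

section
/- There do not exist Newman polynomials p and q with q(X) dividing p(X) in ℤ[X] such that p(3) = 22·q(3). That is, every representation of 22 as a quotient of sums of distinct powers of 3 is local. -/
open Polynomial

lemma newman_ne_zero {f : Polynomial ℤ} (hf : IsNewman f) : f ≠ 0 := by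
  intro h
  have h2 := hf.2
  rw [h, Polynomial.coeff_zero] at h2
  exact absurd h2 (by norm_num)

lemma newman_eval_lb {f : Polynomial ℤ} (hf : IsNewman f) (h0 : f ≠ 0) :
    (3 : ℤ) ^ f.natDegree ≤ f.eval 3 := by
  rw [eval_eq_sum_range]
  have hmem : f.natDegree ∈ Finset.range (f.natDegree + 1) := by simp
  have hlead : f.coeff f.natDegree = 1 := by
    have hne : f.coeff f.natDegree ≠ 0 := by
      intro hz
      exact h0 (Polynomial.leadingCoeff_eq_zero.mp hz)
    rcases hf.1 f.natDegree with h | h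
    · exact absurd h hne
    · exact h
  calc (3:ℤ) ^ f.natDegree = f.coeff f.natDegree * 3 ^ f.natDegree := by rw [hlead]; ring
    _ ≤ ∑ i ∈ Finset.range (f.natDegree + 1), f.coeff i * 3 ^ i := by
        apply Finset.single_le_sum (f := fun i => f.coeff i * (3:ℤ) ^ i) _ hmem
        intro i _
        rcases hf.1 i with h | h <;> simp [h]

lemma newman_eval_ub {f : Polynomial ℤ} (hf : IsNewman f) :
    2 * f.eval 3 < 3 ^ (f.natDegree + 1) := by
  rw [eval_eq_sum_range]
  have h1 : ∑ i ∈ Finset.range (f.natDegree + 1), f.coeff i * (3:ℤ) ^ i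
      ≤ ∑ i ∈ Finset.range (f.natDegree + 1), (3:ℤ) ^ i := by
    apply Finset.sum_le_sum
    intro i _
    rcases hf.1 i with h | h <;> simp [h]
  have h2 : (∑ i ∈ Finset.range (f.natDegree + 1), (3:ℤ) ^ i) * (3 - 1)
      = 3 ^ (f.natDegree + 1) - 1 := geom_sum_mul 3 (f.natDegree + 1)
  nlinarith [h1, h2]

lemma newman_eval_pos {f : Polynomial ℤ} (hf : IsNewman f) : 1 ≤ f.eval 3 := by
  rw [eval_eq_sum_range]
  have hmem : 0 ∈ Finset.range (f.natDegree + 1) := by simp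
  calc (1:ℤ) = f.coeff 0 * 3 ^ 0 := by rw [hf.2]; ring
    _ ≤ ∑ i ∈ Finset.range (f.natDegree + 1), f.coeff i * 3 ^ i := by
        apply Finset.single_le_sum (f := fun i => f.coeff i * (3:ℤ) ^ i) _ hmem
        intro i _
        rcases hf.1 i with h | h <;> simp [h]

theorem stmt_12 :
    ¬ ∃ p q : Polynomial ℤ, IsNewman p ∧ IsNewman q ∧ q ∣ p ∧
      p.eval 3 = 22 * q.eval 3 := by
  rintro ⟨p, q, hp, hq, ⟨r, hr⟩, heval⟩
  have hq0 : q ≠ 0 := newman_ne_zero hq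
  have hp0 : p ≠ 0 := newman_ne_zero hp
  -- constant coeff of r is 1
  have hr0c : r.coeff 0 = 1 := by
    have h := congrArg (fun f => f.coeff 0) hr
    simp only [Polynomial.mul_coeff_zero, hq.2, hp.2, one_mul] at h
    omega
  have hr0 : r ≠ 0 := by
    intro h; rw [h] at hr0c; simp at hr0c
  have hq3pos : (1:ℤ) ≤ q.eval 3 := newman_eval_pos hq
  have hp3 : p.eval 3 = q.eval 3 * r.eval 3 := by rw [hr]; simp
  have hr3 : r.eval 3 = 22 := by
    have : q.eval 3 * r.eval 3 = q.eval 3 * 22 := by rw [← hp3, heval]; ring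
    exact mul_left_cancel₀ (by omega) this
  have hdeg : p.natDegree = q.natDegree + r.natDegree := by
    rw [hr]; exact natDegree_mul hq0 hr0
  -- degree of r is 3
  have hd : r.natDegree = 3 := by
    have hubq := newman_eval_ub hq
    have hlbp := newman_eval_lb hp hp0
    have hubp := newman_eval_ub hp
    have hlbq := newman_eval_lb hq hq0
    rw [hdeg] at hlbp hubp
    rw [pow_add] at hlbp
    have hle : r.natDegree ≤ 3 := by
      by_contra hlt
      push_neg at hlt
      have h81 : (3:ℤ)^4 ≤ 3 ^ r.natDegree := pow_le_pow_right₀ (by norm_num) hlt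
      have hq3 : (3:ℤ)^(q.natDegree) * 3^r.natDegree ≤ 22 * q.eval 3 := by
        rw [← heval]; exact hlbp
      have hqub : 2 * q.eval 3 < 3 * 3 ^ q.natDegree := by
        rw [pow_succ] at hubq; linarith
      have hpos : (0:ℤ) < 3 ^ q.natDegree := by positivity
      nlinarith
    have hge : 3 ≤ r.natDegree := by
      by_contra hlt
      push_neg at hlt
      have h27 : (3:ℤ)^(r.natDegree + 1) ≤ 3 ^ 3 := pow_le_pow_right₀ (by norm_num) (by omega)
      have hp3lb : 22 * 3 ^ q.natDegree ≤ p.eval 3 := by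
        rw [heval]; nlinarith
      rw [show q.natDegree + r.natDegree + 1 = q.natDegree + (r.natDegree + 1) by ring,
        pow_add] at hubp
      have hpos : (0:ℤ) < 3 ^ q.natDegree := by positivity
      nlinarith
    omega
  -- r is monic: coeff 3 = 1
  have hrlead : r.coeff 3 = 1 := by
    have hl : p.leadingCoeff = q.leadingCoeff * r.leadingCoeff := by
      rw [hr, leadingCoeff_mul]
    have hpl : p.leadingCoeff = 1 := by
      have hne : p.leadingCoeff ≠ 0 := leadingCoeff_ne_zero.mpr hp0
      rcases hp.1 p.natDegree with h | h
      · exact absurd h hne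
      · exact h
    have hql : q.leadingCoeff = 1 := by
      have hne : q.leadingCoeff ≠ 0 := leadingCoeff_ne_zero.mpr hq0
      rcases hq.1 q.natDegree with h | h
      · exact absurd h hne
      · exact h
    have : r.leadingCoeff = 1 := by rw [hpl, hql, one_mul] at hl; omega
    have h' : r.coeff r.natDegree = 1 := this
    rwa [hd] at h'
  -- r(3) = 22 gives 3 r1 + 9 r2 = -6
  have hsum : r.coeff 0 + r.coeff 1 * 3 + r.coeff 2 * 9 + r.coeff 3 * 27 = 22 := by
    have := hr3
    rw [eval_eq_sum_range, hd] at this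
    simp [Finset.sum_range_succ] at this
    linarith
  -- coefficient equations
  have hc1 : p.coeff 1 = q.coeff 0 * r.coeff 1 + q.coeff 1 * r.coeff 0 := by
    rw [hr, coeff_mul, Finset.Nat.sum_antidiagonal_eq_sum_range_succ_mk]
    simp [Finset.sum_range_succ]
  have hc2 : p.coeff 2 = q.coeff 0 * r.coeff 2 + q.coeff 1 * r.coeff 1 + q.coeff 2 * r.coeff 0 := by
    rw [hr, coeff_mul, Finset.Nat.sum_antidiagonal_eq_sum_range_succ_mk]
    simp [Finset.sum_range_succ]
  have hc3 : p.coeff 3 = q.coeff 0 * r.coeff 3 + q.coeff 1 * r.coeff 2 + q.coeff 2 * r.coeff 1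
      + q.coeff 3 * r.coeff 0 := by
    rw [hr, coeff_mul, Finset.Nat.sum_antidiagonal_eq_sum_range_succ_mk]
    simp [Finset.sum_range_succ]
  have hp1 := hp.1 1
  have hp2 := hp.1 2
  have hp3' := hp.1 3
  have hq1 := hq.1 1
  have hq2 := hq.1 2
  have hq3 := hq.1 3
  rw [hq.2] at hc1 hc2 hc3
  rw [hr0c] at hc1 hc2 hc3
  rw [hrlead] at hc3
  rcases hq1 with h1 | h1 <;> rcases hq2 with h2 | h2 <;>
    rw [h1, h2] at hc2 hc3 <;> rw [h1] at hc1 <;>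
    simp only [one_mul, zero_mul, mul_one, add_zero, zero_add] at hc1 hc2 hc3 <;>
    omega
end

section
/- There do not exist Newman polynomials p and q with q(X) dividing p(X) in ℤ[X] such that p(3) = 34·q(3). That is, every representation of 34 as a quotient of sums of distinct powers of 3 is local. -/
open Polynomial

/-- Lower-bound certificate for the carry automaton. -/
def nwA (c : ℤ) : ℤ :=
  if c = 0 then 0 else if c = 1 then 1 else if c = 4 then 3 else if c = 5 then 4
  else if c = 11 then 6 else if c = 13 then 7 else if c = 15 then 8 else 9

/-- Upper-bound certificate for the carry automaton. -/
def nwB (c : ℤ) : ℤ :=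
  if c = 0 then 0 else if c = 1 then 1 else if c = 4 then 3 else if c = 5 then 3
  else if c = 11 then 1 else if c = 13 then 7 else if c = 15 then 6 else 7

lemma nw_eval_nonneg {p : Polynomial ℤ} (hp : ∀ i, p.coeff i = 0 ∨ p.coeff i = 1)
    {x : ℤ} (hx : 0 ≤ x) : 0 ≤ p.eval x := by
  rw [Polynomial.eval_eq_sum, Polynomial.sum]
  refine Finset.sum_nonneg fun j _ => ?_
  rcases hp j with h | h <;> simp [h] <;> positivity

lemma nw_eval3_zero {p : Polynomial ℤ} (hp : ∀ i, p.coeff i = 0 ∨ p.coeff i = 1)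
    (h : p.eval 3 = 0) : p = 0 := by
  by_contra hne
  obtain ⟨i, hi⟩ : ∃ i, p.coeff i ≠ 0 := by
    by_contra hall
    push_neg at hall
    exact hne (Polynomial.ext fun n => by simp [hall n])
  have hi1 : p.coeff i = 1 := (hp i).resolve_left hi
  have hmem : i ∈ p.support := Polynomial.mem_support_iff.mpr hi
  have hle : p.coeff i * 3 ^ i ≤ p.eval 3 := by
    rw [Polynomial.eval_eq_sum, Polynomial.sum]
    refine Finset.single_le_sum (f := fun j => p.coeff j * 3 ^ j) (fun j _ => ?_) hmem
    rcases hp j with h' | h' <;> simp [h'] <;> positivity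
  rw [hi1, one_mul, h] at hle
  have h3 : (0 : ℤ) < 3 ^ i := by positivity
  omega

lemma nw_eval_peel (p : Polynomial ℤ) (x : ℤ) :
    p.eval x = x * p.divX.eval x + p.coeff 0 := by
  conv_lhs => rw [← Polynomial.X_mul_divX_add (p := p)]
  simp

lemma nw_key : ∀ n : ℕ, ∀ p q : Polynomial ℤ, ∀ c : ℤ,
    (∀ i, p.coeff i = 0 ∨ p.coeff i = 1) →
    (∀ i, q.coeff i = 0 ∨ q.coeff i = 1) →
    (c = 0 ∨ c = 1 ∨ c = 4 ∨ c = 5 ∨ c = 11 ∨ c = 13 ∨ c = 15 ∨ c = 16) →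
    p.eval 3 = 34 * q.eval 3 + c →
    (p.eval 3).toNat + (q.eval 3).toNat ≤ n →
    nwA c + 10 * q.eval 2 ≤ p.eval 2 ∧ p.eval 2 ≤ 11 * q.eval 2 + nwB c := by
  intro n
  induction n with
  | zero =>
    intro p q c hp hq hc heq hfuel
    have hp3 : 0 ≤ p.eval 3 := nw_eval_nonneg hp (by norm_num)
    have hq3 : 0 ≤ q.eval 3 := nw_eval_nonneg hq (by norm_num)
    have hp30 : p.eval 3 = 0 := by omega
    have hq30 : q.eval 3 = 0 := by omega
    have hc0 : c = 0 := by omega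
    have hp0 : p = 0 := nw_eval3_zero hp hp30
    have hq0 : q = 0 := nw_eval3_zero hq hq30
    subst hp0 hq0 hc0
    norm_num [nwA, nwB]
  | succ n IH =>
    intro p q c hp hq hc heq hfuel
    have hp' : ∀ i, p.divX.coeff i = 0 ∨ p.divX.coeff i = 1 := fun i => by
      rw [Polynomial.coeff_divX]; exact hp (i + 1)
    have hq' : ∀ i, q.divX.coeff i = 0 ∨ q.divX.coeff i = 1 := fun i => by
      rw [Polynomial.coeff_divX]; exact hq (i + 1)
    have ep3 := nw_eval_peel p 3
    have eq3 := nw_eval_peel q 3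
    have ep2 := nw_eval_peel p 2
    have eq2 := nw_eval_peel q 2
    have hp3' : 0 ≤ p.divX.eval 3 := nw_eval_nonneg hp' (by norm_num)
    have hq3' : 0 ≤ q.divX.eval 3 := nw_eval_nonneg hq' (by norm_num)
    have key3 : 3 * (p.divX.eval 3 - 34 * q.divX.eval 3) =
        34 * q.coeff 0 + c - p.coeff 0 := by linarith
    rcases hq 0 with hd | hd <;> rcases hp 0 with he | he
    -- fuel decreases in all four digit cases
    all_goals have hfuel' : (p.divX.eval 3).toNat + (q.divX.eval 3).toNat ≤ n := by omega
    all_goals rcases hc with rfl | rfl | rfl | rfl | rfl | rfl | rfl | rfl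
    -- handle all contradiction cases (3 does not divide 34*d + c - e)
    all_goals try (exfalso; omega)
    -- valid transitions: (c,d,e,c') in
    -- (0,0,0,0),(1,0,1,0),(4,0,1,1),(13,0,1,4),(15,0,0,5),(16,0,1,5),
    -- (0,1,1,11),(5,1,0,13),(11,1,0,15),(15,1,1,16)
    · -- c = 0, d = 0, e = 0, c' = 0
      obtain ⟨h1, h2⟩ := IH p.divX q.divX 0 hp' hq' (by norm_num) (by omega) hfuel'
      norm_num [nwA, nwB] at h1 h2 ⊢
      omega
    · -- c = 15, d = 0, e = 0, c' = 5
      obtain ⟨h1, h2⟩ := IH p.divX q.divX 5 hp' hq' (by norm_num) (by omega) hfuel'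
      norm_num [nwA, nwB] at h1 h2 ⊢
      omega
    · -- c = 1, d = 0, e = 1, c' = 0
      obtain ⟨h1, h2⟩ := IH p.divX q.divX 0 hp' hq' (by norm_num) (by omega) hfuel'
      norm_num [nwA, nwB] at h1 h2 ⊢
      omega
    · -- c = 4, d = 0, e = 1, c' = 1
      obtain ⟨h1, h2⟩ := IH p.divX q.divX 1 hp' hq' (by norm_num) (by omega) hfuel'
      norm_num [nwA, nwB] at h1 h2 ⊢
      omega
    · -- c = 13, d = 0, e = 1, c' = 4
      obtain ⟨h1, h2⟩ := IH p.divX q.divX 4 hp' hq' (by norm_num) (by omega) hfuel'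
      norm_num [nwA, nwB] at h1 h2 ⊢
      omega
    · -- c = 16, d = 0, e = 1, c' = 5
      obtain ⟨h1, h2⟩ := IH p.divX q.divX 5 hp' hq' (by norm_num) (by omega) hfuel'
      norm_num [nwA, nwB] at h1 h2 ⊢
      omega
    · -- c = 5, d = 1, e = 0, c' = 13
      obtain ⟨h1, h2⟩ := IH p.divX q.divX 13 hp' hq' (by norm_num) (by omega) hfuel'
      norm_num [nwA, nwB] at h1 h2 ⊢
      omega
    · -- c = 11, d = 1, e = 0, c' = 15
      obtain ⟨h1, h2⟩ := IH p.divX q.divX 15 hp' hq' (by norm_num) (by omega) hfuel'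
      norm_num [nwA, nwB] at h1 h2 ⊢
      omega
    · -- c = 0, d = 1, e = 1, c' = 11
      obtain ⟨h1, h2⟩ := IH p.divX q.divX 11 hp' hq' (by norm_num) (by omega) hfuel'
      norm_num [nwA, nwB] at h1 h2 ⊢
      omega
    · -- c = 15, d = 1, e = 1, c' = 16
      obtain ⟨h1, h2⟩ := IH p.divX q.divX 16 hp' hq' (by norm_num) (by omega) hfuel'
      norm_num [nwA, nwB] at h1 h2 ⊢
      omega

theorem stmt_13 :
    ¬ ∃ p q : Polynomial ℤ, IsNewman p ∧ IsNewman q ∧ q ∣ p ∧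
      p.eval 3 = 34 * q.eval 3 := by
  rintro ⟨p, q, hp, hq, hdvd, heval⟩
  obtain ⟨hpc, hp0⟩ := hp
  obtain ⟨hqc, hq0⟩ := hq
  have hp' : ∀ i, p.divX.coeff i = 0 ∨ p.divX.coeff i = 1 := fun i => by
    rw [Polynomial.coeff_divX]; exact hpc (i + 1)
  have hq' : ∀ i, q.divX.coeff i = 0 ∨ q.divX.coeff i = 1 := fun i => by
    rw [Polynomial.coeff_divX]; exact hqc (i + 1)
  have ep3 := nw_eval_peel p 3
  have eq3 := nw_eval_peel q 3
  have ep2 := nw_eval_peel p 2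
  have eq2 := nw_eval_peel q 2
  rw [hp0] at ep3 ep2
  rw [hq0] at eq3 eq2
  have heq' : p.divX.eval 3 = 34 * q.divX.eval 3 + 11 := by omega
  obtain ⟨h1, h2⟩ := nw_key ((p.divX.eval 3).toNat + (q.divX.eval 3).toNat)
    p.divX q.divX 11 hp' hq' (by norm_num) heq' le_rfl
  norm_num [nwA, nwB] at h1 h2
  have hq2' : 0 ≤ q.divX.eval 2 := nw_eval_nonneg hq' (by norm_num)
  have hq2pos : 0 < q.eval 2 := by omega
  have hlow : 10 * q.eval 2 + 3 ≤ p.eval 2 := by omega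
  have hhigh : p.eval 2 ≤ 11 * q.eval 2 - 8 := by omega
  obtain ⟨k, hk⟩ : q.eval 2 ∣ p.eval 2 := Polynomial.eval_dvd hdvd
  rcases le_or_gt k 10 with hk10 | hk11
  · have : q.eval 2 * k ≤ q.eval 2 * 10 :=
      mul_le_mul_of_nonneg_left hk10 (le_of_lt hq2pos)
    omega
  · have h11 : (11 : ℤ) ≤ k := hk11
    have : q.eval 2 * 11 ≤ q.eval 2 * k :=
      mul_le_mul_of_nonneg_left h11 (le_of_lt hq2pos)
    omega
end

section
/- There do not exist Newman polynomials p and q with q(X) dividing p(X) in ℤ[X] such that p(3) = 58·q(3). That is, every representation of 58 as a quotient of sums of distinct powers of 3 is local. -/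
open Polynomial

lemma newman_ne_zero_s14 {p : ℤ[X]} (hp : IsNewman p) : p ≠ 0 := by
  intro h
  have := hp.2
  rw [h] at this
  simp at this

lemma newman_monic {p : ℤ[X]} (hp : IsNewman p) : p.Monic := by
  have h0 := newman_ne_zero_s14 hp
  rcases hp.1 p.natDegree with h | h
  · exact absurd (leadingCoeff_eq_zero.mp h) h0
  · exact h

lemma newman_eval_lower {p : ℤ[X]} (hp : IsNewman p) : (3:ℤ) ^ p.natDegree ≤ p.eval 3 := by
  have hm := newman_monic hp
  rw [Polynomial.eval_eq_sum_range]
  have h1 : (3:ℤ) ^ p.natDegree = p.coeff p.natDegree * 3 ^ p.natDegree := by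
    rw [hm.coeff_natDegree, one_mul]
  rw [h1]
  refine Finset.single_le_sum (f := fun i => p.coeff i * (3:ℤ) ^ i)
    (fun i _ => ?_) (Finset.self_mem_range_succ _)
  show (0:ℤ) ≤ p.coeff i * 3 ^ i
  rcases hp.1 i with h | h
  · rw [h, zero_mul]
  · rw [h, one_mul]
    positivity

lemma newman_eval_upper {p : ℤ[X]} (hp : IsNewman p) :
    2 * p.eval 3 ≤ 3 ^ (p.natDegree + 1) - 1 := by
  have h1 : p.eval 3 ≤ ∑ i ∈ Finset.range (p.natDegree + 1), (3:ℤ) ^ i := by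
    rw [Polynomial.eval_eq_sum_range]
    refine Finset.sum_le_sum fun i _ => ?_
    rcases hp.1 i with h | h <;> simp [h]
  have h2 : (∑ i ∈ Finset.range (p.natDegree + 1), (3:ℤ) ^ i) * (3 - 1)
      = 3 ^ (p.natDegree + 1) - 1 := geom_sum_mul 3 (p.natDegree + 1)
  linarith

theorem stmt_14 :
    ¬ ∃ p q : Polynomial ℤ, IsNewman p ∧ IsNewman q ∧ q ∣ p ∧
      p.eval 3 = 58 * q.eval 3 := by
  rintro ⟨p, q, hp, hq, ⟨r, hr⟩, heval⟩
  have hq0 : q ≠ 0 := newman_ne_zero_s14 hq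
  have hp0 : p ≠ 0 := newman_ne_zero_s14 hp
  have hr0 : r ≠ 0 := by
    rintro rfl
    rw [mul_zero] at hr
    exact hp0 hr
  have hqe : (0:ℤ) < q.eval 3 :=
    lt_of_lt_of_le (pow_pos (by norm_num) _) (newman_eval_lower hq)
  have hre : r.eval 3 = 58 := by
    have h : q.eval 3 * r.eval 3 = q.eval 3 * 58 := by
      have : p.eval 3 = q.eval 3 * r.eval 3 := by rw [hr, eval_mul]
      linarith
    exact mul_left_cancel₀ (ne_of_gt hqe) h
  have hmq := newman_monic hq
  have hmp := newman_monic hp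
  have hmr : r.Monic := by
    have h : (q * r).Monic := hr ▸ hmp
    exact hmq.of_mul_monic_left h
  have hdeg : p.natDegree = q.natDegree + r.natDegree := by
    rw [hr]; exact natDegree_mul hq0 hr0
  -- r has degree exactly 4
  have hd4 : r.natDegree = 4 := by
    have hlow := newman_eval_lower hp
    have hup := newman_eval_upper hp
    have hlowq := newman_eval_lower hq
    have hupq := newman_eval_upper hq
    rw [hdeg, pow_add] at hlow
    rw [hdeg] at hup
    have hq3pos : (0:ℤ) < 3 ^ q.natDegree := pow_pos (by norm_num) _
    -- upper bound on degree: 3^nq * 3^d ≤ p(3) = 58 q(3) < 87 * 3^nq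
    have h87 : (3:ℤ) ^ r.natDegree < 87 := by
      have h1 : (3:ℤ) ^ q.natDegree * 3 ^ r.natDegree < 3 ^ q.natDegree * 87 := by
        have : (3:ℤ) ^ (q.natDegree + 1) = 3 ^ q.natDegree * 3 := pow_succ 3 _
        nlinarith
      exact lt_of_mul_lt_mul_left h1 (le_of_lt hq3pos)
    -- lower bound: 116 * 3^nq ≤ 3^nq * 3^(d+1)
    have h116 : (116:ℤ) < 3 ^ (r.natDegree + 1) := by
      have h1 : (3:ℤ) ^ q.natDegree * 116 < 3 ^ q.natDegree * 3 ^ (r.natDegree + 1) := by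
        have : (3:ℤ) ^ (q.natDegree + r.natDegree + 1)
            = 3 ^ q.natDegree * 3 ^ (r.natDegree + 1) := by
          rw [← pow_add]; ring_nf
        nlinarith
      exact lt_of_mul_lt_mul_left h1 (le_of_lt hq3pos)
    by_contra hne
    have h4 : r.natDegree ≤ 4 := by
      by_contra h
      push_neg at h
      have : (3:ℤ) ^ 5 ≤ 3 ^ r.natDegree := pow_le_pow_right₀ (by norm_num) h
      norm_num at this
      omega
    have h5 : 4 ≤ r.natDegree := by
      by_contra h
      push_neg at h
      have : r.natDegree + 1 ≤ 4 := by omega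
      have : (3:ℤ) ^ (r.natDegree + 1) ≤ 3 ^ 4 := pow_le_pow_right₀ (by norm_num) this
      norm_num at this
      omega
    omega
  -- coefficient facts
  have hr4 : r.coeff 4 = 1 := by
    have := hmr.coeff_natDegree
    rwa [hd4] at this
  have hr0c : r.coeff 0 = 1 := by
    have h : p.coeff 0 = q.coeff 0 * r.coeff 0 := by rw [hr, mul_coeff_zero]
    rw [hp.2, hq.2, one_mul] at h
    exact h.symm
  have hrtop : ∀ j, 5 ≤ j → r.coeff j = 0 := fun j hj =>
    coeff_eq_zero_of_natDegree_lt (by omega)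
  -- r(3) expansion
  have hre' : r.coeff 1 * 3 + r.coeff 2 * 9 + r.coeff 3 * 27 = -24 := by
    have h5 : r.natDegree < 5 := by omega
    have h := Polynomial.eval_eq_sum_range' h5 (3:ℤ)
    rw [hre] at h
    simp [Finset.sum_range_succ, hr0c, hr4] at h
    linarith
  -- convolution equations
  have hconv : ∀ n, p.coeff n = ∑ i ∈ Finset.range (n + 1), q.coeff i * r.coeff (n - i) := by
    intro n
    rw [hr, Polynomial.coeff_mul, Finset.Nat.sum_antidiagonal_eq_sum_range_succ_mk]
  have e1 := hconv 1
  have e2 := hconv 2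
  have e3 := hconv 3
  have e4 := hconv 4
  have e5 := hconv 5
  have e6 := hconv 6
  simp only [Finset.sum_range_succ, Finset.sum_range_zero, zero_add] at e1 e2 e3 e4 e5 e6
  norm_num [hr0c, hr4, hq.2, hrtop 5 (by norm_num), hrtop 6 (by norm_num)] at e1 e2 e3 e4 e5 e6
  have bp : ∀ i, 0 ≤ p.coeff i ∧ p.coeff i ≤ 1 := by
    intro i; rcases hp.1 i with h | h <;> simp [h]
  have bp1 := bp 1
  have bp2 := bp 2
  have bp3 := bp 3
  have bp4 := bp 4
  have bp5 := bp 5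
  have bp6 := bp 6
  have bq6 : 0 ≤ q.coeff 6 ∧ q.coeff 6 ≤ 1 := by
    rcases hq.1 6 with h | h <;> simp [h]
  rcases hq.1 1 with q1 | q1 <;> rcases hq.1 2 with q2 | q2 <;>
    rcases hq.1 3 with q3 | q3 <;> rcases hq.1 4 with q4 | q4 <;>
    rcases hq.1 5 with q5 | q5 <;>
    simp only [q1, q2, q3, q4, q5, mul_zero, mul_one, zero_mul, one_mul, add_zero,
      zero_add] at * <;>
    omega
end

section
/- Let p(X) = X^6 + X^4 + X + 1 and q(X) = X^3 + X^2 + 1. Then p and q are Newman polynomials, p(3) = 22·q(3) (indeed p(3) = 814 and q(3) = 37), and q(X) does not divide p(X) in ℤ[X]. Hence 22 is representable as a quotient of sums of distinct powers of 3, and this representation is local. -/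
open Polynomial

theorem stmt_16 (p q : Polynomial ℤ)
    (hp : p = X ^ 6 + X ^ 4 + X + 1) (hq : q = X ^ 3 + X ^ 2 + 1) :
    IsNewman p ∧ IsNewman q ∧ p.eval 3 = 814 ∧ q.eval 3 = 37 ∧
    p.eval 3 = 22 * q.eval 3 ∧ ¬ q ∣ p := by
  subst hp hq
  refine ⟨⟨fun i => ?_, by simp⟩, ⟨fun i => ?_, by simp⟩, by norm_num, by norm_num,
    by norm_num, ?_⟩
  · simp only [coeff_add, coeff_X_pow, coeff_X, coeff_one]
    split_ifs <;> omega
  · simp only [coeff_add, coeff_X_pow, coeff_one]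
    split_ifs <;> omega
  · rintro ⟨c, hc⟩
    have h := congrArg (eval 1) hc
    simp at h
    omega
end

section
/- Let p(X) = X^9 + X^8 + X^2 + X + 1 and q(X) = X^6 + X^4 + X^3 + X^2 + 1. Then p and q are Newman polynomials, p(3) = 31·q(3), and q(X) does not divide p(X) in ℤ[X]. Hence 31, which also has the trivial universal representation 31 = 3^3 + 3 + 1, possesses a local representation as a quotient of sums of distinct powers of 3. -/
open Polynomial

theorem stmt_17 (p q : Polynomial ℤ)
    (hp : p = X ^ 9 + X ^ 8 + X ^ 2 + X + 1)
    (hq : q = X ^ 6 + X ^ 4 + X ^ 3 + X ^ 2 + 1) :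
    IsNewman p ∧ IsNewman q ∧ p.eval 3 = 31 * q.eval 3 ∧ ¬ q ∣ p := by
  subst hp hq
  refine ⟨⟨fun i => ?_, ?_⟩, ⟨fun i => ?_, ?_⟩, ?_, ?_⟩
  · simp only [coeff_add, coeff_X_pow, coeff_one, coeff_X]
    split_ifs <;> norm_num <;> omega
  · simp
  · simp only [coeff_add, coeff_X_pow, coeff_one, coeff_X]
    split_ifs <;> norm_num <;> omega
  · simp
  · norm_num
  · intro h
    have h2 : ((X:ℤ[X]) ^ 6 + X ^ 4 + X ^ 3 + X ^ 2 + 1).eval 2 ∣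
        ((X:ℤ[X]) ^ 9 + X ^ 8 + X ^ 2 + X + 1).eval 2 := eval_dvd h
    norm_num at h2
end

section
/- There do not exist Newman polynomials p and q with p(3) = 529·q(3). That is, 529 cannot be written as a quotient of sums of distinct powers of 3, even though 529 ≡ 1 (mod 3) and 529 lies in the interval (2/3·3^6, 3/2·3^6). -/
open Polynomial

/-- Reachable carry states for the base-3 digit automaton of `p(3) = 529 q(3)`. -/
def carryL : List ℤ :=
  [2, 7, 22, 26, 29, 59, 62, 65, 66, 67, 68, 78, 79, 87, 176, 177, 185, 186,
   196, 197, 198, 199, 202, 205, 235, 238, 242, 257, 262]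

lemma carry_closure :
    ∀ c ∈ carryL, ∀ d ∈ ([0, 1] : List ℤ), ∀ e ∈ ([0, 1] : List ℤ),
      (3 : ℤ) ∣ (c + 529 * d - e) → (c + 529 * d - e) / 3 ∈ carryL := by
  decide

lemma zero_not_mem_carryL : (0 : ℤ) ∉ carryL := by decide

/-- Truncated base-3 evaluation. -/
noncomputable def trunc (p : Polynomial ℤ) (k : ℕ) : ℤ :=
  ∑ i ∈ Finset.range k, p.coeff i * 3 ^ i

lemma trunc_eq_eval (p : Polynomial ℤ) (k : ℕ) (hk : p.natDegree < k) :
    trunc p k = p.eval 3 := by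
  rw [trunc, Polynomial.eval_eq_sum_range' hk]

lemma pow_dvd_eval_sub_trunc (p : Polynomial ℤ) (k : ℕ) :
    (3 : ℤ) ^ k ∣ p.eval 3 - trunc p k := by
  set n := max (p.natDegree + 1) k with hn
  have hdeg : p.natDegree < n := lt_of_lt_of_le (Nat.lt_succ_self _) (le_max_left _ _)
  have hkn : k ≤ n := le_max_right _ _
  rw [← trunc_eq_eval p n hdeg]
  have : trunc p n - trunc p k = ∑ i ∈ Finset.Ico k n, p.coeff i * 3 ^ i := by
    rw [trunc, trunc, eq_comm, Finset.sum_Ico_eq_sub _ hkn]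
  rw [this]
  refine Finset.dvd_sum fun i hi => Dvd.dvd.mul_left ?_ _
  exact pow_dvd_pow 3 (Finset.mem_Ico.mp hi).1

theorem stmt_18 :
    (529 : ℤ) % 3 = 1 ∧
    (2 : ℚ) / 3 * 3 ^ 6 < 529 ∧ (529 : ℚ) < 3 / 2 * 3 ^ 6 ∧
    ¬ ∃ p q : Polynomial ℤ, IsNewman p ∧ IsNewman q ∧
      p.eval 3 = 529 * q.eval 3 := by
  refine ⟨by norm_num, by norm_num, by norm_num, ?_⟩
  rintro ⟨p, q, ⟨hp01, hp0⟩, ⟨hq01, hq0⟩, hpq⟩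
  -- invariant: for all k ≥ 1, the carry lies in carryL
  have key : ∀ k : ℕ, ∃ c ∈ carryL,
      529 * trunc q (k + 1) - trunc p (k + 1) = c * 3 ^ (k + 1) := by
    intro k
    induction k with
    | zero =>
      refine ⟨176, by decide, ?_⟩
      simp [trunc, Finset.sum_range_one, hp0, hq0]
    | succ k ih =>
      obtain ⟨c, hcL, hc⟩ := ih
      set δ := q.coeff (k + 1) with hδ
      set ε := p.coeff (k + 1) with hε
      have hsum : 529 * trunc q (k + 2) - trunc p (k + 2)
          = (c + 529 * δ - ε) * 3 ^ (k + 1) := by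
        have e1 : trunc q (k + 2) = trunc q (k + 1) + δ * 3 ^ (k + 1) := by
          rw [trunc, trunc, Finset.sum_range_succ]
        have e2 : trunc p (k + 2) = trunc p (k + 1) + ε * 3 ^ (k + 1) := by
          rw [trunc, trunc, Finset.sum_range_succ]
        rw [e1, e2]
        linear_combination hc
      -- divisibility by 3^(k+2)
      have hdvd : (3 : ℤ) ^ (k + 2) ∣ 529 * trunc q (k + 2) - trunc p (k + 2) := by
        have h1 := pow_dvd_eval_sub_trunc p (k + 2)
        have h2 := pow_dvd_eval_sub_trunc q (k + 2)
        have : 529 * trunc q (k + 2) - trunc p (k + 2)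
            = (p.eval 3 - trunc p (k + 2)) - 529 * (q.eval 3 - trunc q (k + 2)) := by
          rw [hpq]; ring
        rw [this]
        exact dvd_sub h1 (Dvd.dvd.mul_left h2 _)
      rw [hsum] at hdvd
      have h3 : (3 : ℤ) ∣ (c + 529 * δ - ε) := by
        obtain ⟨m, hm⟩ := hdvd
        refine ⟨m, ?_⟩
        have hne : (3 : ℤ) ^ (k + 1) ≠ 0 := pow_ne_zero _ (by norm_num)
        have : (c + 529 * δ - ε) * 3 ^ (k + 1) = (3 * m) * 3 ^ (k + 1) := by
          rw [hm]; ring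
        exact mul_right_cancel₀ hne this
      have hδL : δ ∈ ([0, 1] : List ℤ) := by
        rcases hq01 (k + 1) with h | h <;> simp [hδ, h]
      have hεL : ε ∈ ([0, 1] : List ℤ) := by
        rcases hp01 (k + 1) with h | h <;> simp [hε, h]
      have hc'L := carry_closure c hcL δ hδL ε hεL h3
      refine ⟨(c + 529 * δ - ε) / 3, hc'L, ?_⟩
      rw [hsum]
      obtain ⟨m, hm⟩ := h3
      rw [hm]
      rw [Int.mul_ediv_cancel_left _ (by norm_num : (3:ℤ) ≠ 0)]
      ring
  -- take k large
  set K := max p.natDegree q.natDegree + 1 with hK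
  obtain ⟨c, hcL, hc⟩ := key K
  have hpd : p.natDegree < K + 1 := by
    have := le_max_left p.natDegree q.natDegree; omega
  have hqd : q.natDegree < K + 1 := by
    have := le_max_right p.natDegree q.natDegree; omega
  rw [trunc_eq_eval p _ hpd, trunc_eq_eval q _ hqd, hpq] at hc
  have hc0 : c * 3 ^ (K + 1) = 0 := by linarith
  have : c = 0 := by
    have hne : (3 : ℤ) ^ (K + 1) ≠ 0 := pow_ne_zero _ (by norm_num)
    exact (mul_eq_zero.mp hc0).resolve_right hne
  rw [this] at hcL
  exact zero_not_mem_carryL hcL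
end

section
/- For every integer b ≥ 2, the integer b + 1 divides ∑_{i=0}^{b} b^{2i}, while the polynomial X + 1 does not divide ∑_{i=0}^{b} X^{2i} in ℤ[X]. Consequently, for every base b there exist local representations of integers as quotients of sums of distinct powers of b, namely (∑_{i=0}^{b} b^{2i})/(b + 1). -/
open Polynomial

theorem stmt_19 (b : ℕ) (hb : 2 ≤ b) :
    ((b : ℤ) + 1 ∣ ∑ i ∈ Finset.range (b + 1), (b : ℤ) ^ (2 * i)) ∧
    ¬ ((X + 1 : Polynomial ℤ) ∣ ∑ i ∈ Finset.range (b + 1), X ^ (2 * i)) := by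
  constructor
  · have key : ((b:ℤ)+1) ∣ ∑ i ∈ Finset.range (b + 1), ((b : ℤ) ^ (2 * i) - 1) := by
      refine Finset.dvd_sum fun i _ => ?_
      have h1 : ((b:ℤ)+1) ∣ (b:ℤ)^2 - 1^2 := ⟨(b:ℤ)-1, by ring⟩
      have h2 : ((b:ℤ)^2 - 1^2) ∣ ((b:ℤ)^2)^i - (1^2)^i := sub_dvd_pow_sub_pow _ _ i
      have := h1.trans h2
      simpa [pow_mul] using this
    have heq : (∑ i ∈ Finset.range (b + 1), (b : ℤ) ^ (2 * i)) =
        (∑ i ∈ Finset.range (b + 1), ((b : ℤ) ^ (2 * i) - 1)) + ((b:ℤ)+1) := by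
      rw [Finset.sum_sub_distrib, Finset.sum_const, Finset.card_range]
      ring
    rw [heq]
    exact dvd_add key dvd_rfl
  · intro hdvd
    have h := Polynomial.eval_dvd (x := (-1 : ℤ)) hdvd
    simp [Polynomial.eval_finset_sum, pow_mul] at h
    omega
end
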